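/- arXiv:0710.3511 — 6 statements merged into one kernel-verified Lean document; each statement's English description precedes it below -/
import Mathlib

section
/- Let n ≥ 1 and let π be a group such that the second group cohomology H²(π, ℤ/nℤ) of π with coefficients in the trivial π-module ℤ/nℤ vanishes. Then for every group homomorphism η : π → ℂ* there exists a group homomorphism η̃ : π → ℂ* such that (η̃(γ))ⁿ = η(γ) for all γ ∈ π. -/
/-!
Raising to the `n`-th power exhibits `ℂˣ` as a central extension of `ℂˣ` by the `n`-th roots of
unity `μₙ ≅ ℤ/nℤ`. Choosing an `n`-th root `s γ` of each `η γ`, the defect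
`s g * s h * (s (g * h))⁻¹` is a 2-cocycle with values in `μₙ`. As `H²(π, ℤ/nℤ) = 0` it is a
coboundary `b h - b (g * h) + b g`, and `γ ↦ s γ * ζ ^ (-b γ)` is then a homomorphism that is
still an `n`-th root of `η`.
-/

universe u

namespace groupCohomology

variable {k A π : Type u} [CommRing k] [AddCommGroup A] [Module k A] [Group π]

theorem exists_coboundary_trivial_of_subsingleton_H2
    (hH2 : Subsingleton (H2 (Rep.trivial k π A))) (f : π → π → A)
    (hf : ∀ g h j, f (g * h) j + f g h = f h j + f g (h * j)) :
    ∃ b : π → A, ∀ g h, f g h = b h - b (g * h) + b g := by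
  have hcocycle : (fun p : π × π => f p.1 p.2) ∈ cocycles₂ (Rep.trivial k π A) :=
    (mem_cocycles₂_iff _).2 hf
  obtain ⟨b, hb⟩ := (H2π_eq_zero_iff ⟨_, hcocycle⟩).1 (Subsingleton.elim _ _)
  exact ⟨b, fun g h => (congrFun hb (g, h)).symm⟩

theorem exists_lift_of_subsingleton_H2 {E B : Type*} [CommGroup E] [Group B]
    (hH2 : Subsingleton (H2 (Rep.trivial k π A))) {ι : Multiplicative A →* E}
    (hι : Function.Injective ι) {p : E →* B} (hp : Function.Surjective p)
    (hker : p.ker = ι.range) (η : π →* B) :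
    ∃ η' : π →* E, p.comp η' = η := by
  choose s hs using fun g => hp (η g)
  have hdefect : ∀ g h, ∃ x : A, ι (.ofAdd x) = s g * s h * (s (g * h))⁻¹ := fun g h => by
    have : s g * s h * (s (g * h))⁻¹ ∈ p.ker := by
      rw [MonoidHom.mem_ker, map_mul, map_mul, map_inv, hs, hs, hs, ← map_mul, mul_inv_cancel]
    obtain ⟨x, hx⟩ := hker ▸ this
    exact ⟨x.toAdd, hx⟩
  choose a ha using hdefect
  have hcocycle : ∀ g h j, a (g * h) j + a g h = a h j + a g (h * j) := fun g h j => by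
    apply hι.comp Multiplicative.ofAdd.injective
    simp only [Function.comp_apply, ofAdd_add, map_mul, ha]
    rw [mul_assoc g h j]
    apply Additive.ofMul.injective
    simp only [ofMul_mul, ofMul_inv]
    abel
  obtain ⟨b, hb⟩ := exists_coboundary_trivial_of_subsingleton_H2 hH2 a hcocycle
  have hιb : ∀ g, p (ι (.ofAdd (b g))) = 1 := fun g => by
    rw [← MonoidHom.mem_ker, hker]
    exact ⟨_, rfl⟩
  refine ⟨MonoidHom.mk' (fun g => s g * (ι (.ofAdd (b g)))⁻¹) fun g h => ?_, ?_⟩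
  · have hcoboundary := ha g h
    rw [hb, ofAdd_add, ofAdd_sub, map_mul, map_div] at hcoboundary
    apply Additive.ofMul.injective
    apply_fun Additive.ofMul at hcoboundary
    simp only [ofMul_mul, ofMul_inv, ofMul_div] at hcoboundary ⊢
    rw [← sub_eq_zero, ← sub_eq_zero.2 hcoboundary]
    abel
  · ext g
    simp [hs, hιb]

end groupCohomology

theorem IsPrimitiveRoot.exists_injective_range_eq_ker_powMonoidHom {R : Type*} [CommRing R]
    [IsDomain R] {n : ℕ} [NeZero n] {ζ : Rˣ} (hζ : IsPrimitiveRoot ζ n) :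
    ∃ ι : Multiplicative (ZMod n) →* Rˣ,
      Function.Injective ι ∧ (powMonoidHom n : Rˣ →* Rˣ).ker = ι.range := by
  refine ⟨(Subgroup.zpowers ζ).subtype.comp
    (AddMonoidHom.toMultiplicativeLeft hζ.zmodEquivZPowers.toAddMonoidHom), ?_, ?_⟩
  · exact Subtype.val_injective.comp hζ.zmodEquivZPowers.injective
  · rw [MonoidHom.range_comp, MonoidHom.range_eq_top.2 hζ.zmodEquivZPowers.surjective,
      ← MonoidHom.range_eq_map, Subgroup.range_subtype, hζ.zpowers_eq]
    rfl

theorem IsAlgClosed.surjective_powMonoidHom_units {K : Type*} [Field K] [IsAlgClosed K]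
    {n : ℕ} (hn : n ≠ 0) : Function.Surjective (powMonoidHom n : Kˣ →* Kˣ) := fun u => by
  obtain ⟨z, hz⟩ := IsAlgClosed.exists_pow_nat_eq (u : K) (Nat.pos_of_ne_zero hn)
  have hz0 : z ≠ 0 := by
    rintro rfl
    exact u.ne_zero (by rw [← hz, zero_pow hn])
  exact ⟨Units.mk0 z hz0, Units.ext hz⟩

/-- If `n ≥ 1` and the second group cohomology of `π` with coefficients in the trivial
`π`-module `ℤ/nℤ` vanishes, then every homomorphism `η : π → ℂ*` admits an `n`-th root
which is again a homomorphism. -/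
theorem exists_nth_root_of_homomorphism (n : ℕ) (hn : 1 ≤ n) (π : Type) [Group π]
    (hH2 : Subsingleton (groupCohomology (Rep.trivial (ZMod n) π (ZMod n)) 2))
    (η : π →* ℂˣ) :
    ∃ ηtilde : π →* ℂˣ, ∀ γ : π, (ηtilde γ) ^ n = η γ := by
  have hn0 : n ≠ 0 := by omega
  have : NeZero n := ⟨hn0⟩
  have hζ := (Complex.isPrimitiveRoot_exp n hn0).isUnit_unit hn0
  obtain ⟨ι, hι, hker⟩ := hζ.exists_injective_range_eq_ker_powMonoidHom
  obtain ⟨ηtilde, hlift⟩ := groupCohomology.exists_lift_of_subsingleton_H2 hH2 hι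
    (IsAlgClosed.surjective_powMonoidHom_units hn0) hker η
  exact ⟨ηtilde, DFunLike.congr_fun hlift⟩
end

section
/- Let α, β ∈ ℂ with β ≠ 0 and α ≠ 1, and let A : ℂ → M(3,ℂ) be a matrix-valued map each of whose nine entries is analytic at 0, with A(0) = β·[[α,0,0],[0,1,1],[0,0,1]] (rows (βα,0,0), (0,β,β), (0,0,β)). Then there exist ε > 0 and a matrix-valued map C : ℂ → M(3,ℂ), with all entries analytic at 0, such that C(0) = I, det C(t) = 1 for all |t| < ε, and for all t with |t| < ε the conjugated matrix C(t)·A(t)·C(t)⁻¹ has vanishing (1,2), (1,3), (2,1) and (3,1) entries, i.e., it has the block form [[a₁₁(t),0,0],[0,a₂₂(t),a₂₃(t)],[0,a₃₂(t),a₃₃(t)]]. -/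
/-!
The vector `e₀` is a right and a left eigenvector of `A 0` for the simple eigenvalue `βα`. The
analytic implicit function theorem (via the analytic inverse function theorem) continues them to
analytic right and left eigenvectors `(1, u t)` and `(1, w t)` of `A t`. The line spanned by
`(1, u t)` and the plane annihilated by `(1, w t)` are both invariant under `A t` and are
complementary as long as `1 + w t ⬝ᵥ u t ≠ 0`; in an adapted basis normalised to determinant one,
`A t` is block diagonal.
-/

open Filter Topology Matrix

section ImplicitFunction

variable {𝕜 : Type*} [NontriviallyNormedField 𝕜]
  {E₁ : Type*} [NormedAddCommGroup E₁] [NormedSpace 𝕜 E₁] [CompleteSpace E₁]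
  {E₂ : Type*} [NormedAddCommGroup E₂] [NormedSpace 𝕜 E₂] [CompleteSpace E₂]
  {F : Type*} [NormedAddCommGroup F] [NormedSpace 𝕜 F]

theorem AnalyticAt.exists_analyticAt_implicitFunction {f : E₁ × E₂ → F} {u : E₁ × E₂}
    (hf : AnalyticAt 𝕜 f u) (hinv : (fderiv 𝕜 f u ∘L .inr 𝕜 E₁ E₂).IsInvertible) :
    ∃ φ : E₁ → E₂, AnalyticAt 𝕜 φ u.1 ∧ φ u.1 = u.2 ∧ ∀ᶠ x in 𝓝 u.1, f (x, φ x) = f u := by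
  obtain ⟨L, hL⟩ := hinv
  set G : E₁ × E₂ → E₁ × F := fun z => (z.1, f z)
  have hG : AnalyticAt 𝕜 G u := analyticAt_fst.prod hf
  set i := (ContinuousLinearEquiv.refl 𝕜 E₁).skewProd L (fderiv 𝕜 f u ∘L .inl 𝕜 E₁ E₂)
  have hGi : fderiv 𝕜 G u = i := by
    rw [(hasFDerivAt_fst.prodMk hf.differentiableAt.hasFDerivAt).fderiv]
    refine ContinuousLinearMap.ext fun z => Prod.ext rfl ?_
    simp [i, ← hL, add_comm, ← (fderiv 𝕜 f u).comp_inl_add_comp_inr z]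
  have hGs : HasStrictFDerivAt G (i : E₁ × E₂ →L[𝕜] E₁ × F) u := hGi ▸ hG.hasStrictFDerivAt
  set Φ := hGs.toOpenPartialHomeomorph G
  have hu : u ∈ Φ.source := hGs.mem_toOpenPartialHomeomorph_source
  have hΦ : AnalyticAt 𝕜 Φ.symm (G u) := Φ.analyticAt_symm' hu hG hGi
  refine ⟨fun x => (Φ.symm (x, f u)).2, ?_, ?_, ?_⟩
  · exact analyticAt_snd.comp (hΦ.comp_of_eq (analyticAt_id.prod analyticAt_const) rfl)
  · exact congrArg Prod.snd (Φ.left_inv hu)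
  · have hcont : ContinuousAt (fun x : E₁ => (x, f u)) u.1 := by fun_prop
    filter_upwards [hcont (Φ.open_target.mem_nhds (Φ.map_source hu))] with x hx
    have hx : G (Φ.symm (x, f u)) = (x, f u) := Φ.right_inv hx
    have hfst : (Φ.symm (x, f u)).1 = x := congrArg Prod.fst hx
    calc f (x, (Φ.symm (x, f u)).2) = f (Φ.symm (x, f u)) := congrArg f (Prod.ext hfst.symm rfl)
      _ = f u := congrArg Prod.snd hx

end ImplicitFunction

section Eigenvector

variable {n : ℕ}

section Residual

variable {K : Type*} [CommRing K]

/-- Vanishes exactly when `vecCons 1 u` is an eigenvector of `M`. -/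
def eigenResidual (M : Matrix (Fin (n + 1)) (Fin (n + 1)) K)
    (u : Fin n → K) : Fin n → K :=
  fun i => (M *ᵥ vecCons 1 u) i.succ - (M *ᵥ vecCons 1 u) 0 * u i

theorem mulVec_cons_one_eq_smul_of_eigenResidual_eq_zero
    {M : Matrix (Fin (n + 1)) (Fin (n + 1)) K} {u : Fin n → K} (h : eigenResidual M u = 0) :
    M *ᵥ vecCons 1 u = (M *ᵥ vecCons 1 u) 0 • vecCons 1 u := by
  ext i
  refine Fin.cases (by simp) (fun i => ?_) i
  simpa [eigenResidual, sub_eq_zero] using congrFun h i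

theorem eigenResidual_eq_mulVec_of_blockDiagonal
    {M : Matrix (Fin (n + 1)) (Fin (n + 1)) K} (hcol : ∀ i : Fin n, M i.succ 0 = 0)
    (hrow : ∀ j : Fin n, M 0 j.succ = 0) (u : Fin n → K) :
    eigenResidual M u = (M.submatrix Fin.succ Fin.succ - M 0 0 • 1) *ᵥ u := by
  ext i
  simp [eigenResidual, mulVec, dotProduct, Fin.sum_univ_succ, hcol, hrow, sub_mul,
    Finset.sum_sub_distrib, one_apply]

end Residual

variable {𝕜 : Type*} [NontriviallyNormedField 𝕜]
  {E : Type*} [NormedAddCommGroup E] [NormedSpace 𝕜 E]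

theorem analyticAt_eigenResidual {A : E → Matrix (Fin (n + 1)) (Fin (n + 1)) 𝕜}
    {z : E × (Fin n → 𝕜)} (hA : ∀ i j, AnalyticAt 𝕜 (fun x => A x i j) z.1) :
    AnalyticAt 𝕜 (fun z : E × (Fin n → 𝕜) => eigenResidual (A z.1) z.2) z := by
  have hA' : ∀ i j, AnalyticAt 𝕜 (fun z : E × (Fin n → 𝕜) => A z.1 i j) z :=
    fun i j => (hA i j).comp analyticAt_fst
  have hcons : ∀ j, AnalyticAt 𝕜 (fun z : E × (Fin n → 𝕜) => vecCons (1 : 𝕜) z.2 j) z := by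
    intro j
    refine Fin.cases ?_ (fun j => ?_) j
    · simpa using analyticAt_const
    · exact ((ContinuousLinearMap.proj (R := 𝕜) (φ := fun _ : Fin n => 𝕜) j).analyticAt _).comp
        analyticAt_snd
  have hmulVec : ∀ k, AnalyticAt 𝕜 (fun z : E × (Fin n → 𝕜) => (A z.1 *ᵥ vecCons 1 z.2) k) z :=
    fun k => by
      simpa only [mulVec, dotProduct] using
        Finset.analyticAt_fun_sum _ fun j _ => (hA' k j).fun_mul (hcons j)
  exact analyticAt_pi_iff.2 fun i => (hmulVec i.succ).sub ((hmulVec 0).mul (hcons i.succ))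

theorem exists_analyticAt_eigenvector_of_blockDiagonal [CompleteSpace 𝕜] [CompleteSpace E]
    {A : E → Matrix (Fin (n + 1)) (Fin (n + 1)) 𝕜} {x₀ : E}
    (hA : ∀ i j, AnalyticAt 𝕜 (fun x => A x i j) x₀)
    (hcol : ∀ i : Fin n, A x₀ i.succ 0 = 0) (hrow : ∀ j : Fin n, A x₀ 0 j.succ = 0)
    (hdet : ((A x₀).submatrix Fin.succ Fin.succ - A x₀ 0 0 • 1).det ≠ 0) :
    ∃ u : E → Fin n → 𝕜, AnalyticAt 𝕜 u x₀ ∧ u x₀ = 0 ∧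
      ∀ᶠ x in 𝓝 x₀, ∃ μ : 𝕜, A x *ᵥ vecCons 1 (u x) = μ • vecCons 1 (u x) := by
  set f : E × (Fin n → 𝕜) → Fin n → 𝕜 := fun z => eigenResidual (A z.1) z.2
  set M := (A x₀).submatrix Fin.succ Fin.succ - A x₀ 0 0 • 1
  have hf : AnalyticAt 𝕜 f (x₀, 0) := analyticAt_eigenResidual hA
  have hfx₀ : ∀ v, f (x₀, v) = M *ᵥ v := eigenResidual_eq_mulVec_of_blockDiagonal hcol hrow
  have hpartial :
      fderiv 𝕜 f (x₀, 0) ∘L .inr 𝕜 E _ = LinearMap.toContinuousLinearMap (toLin' M) := by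
    have h := hf.differentiableAt.hasFDerivAt.comp (0 : Fin n → 𝕜) (hasFDerivAt_prodMk_right x₀ 0)
    refine h.unique ?_
    rw [show f ∘ (x₀, ·) = LinearMap.toContinuousLinearMap (toLin' M) from funext hfx₀]
    exact ContinuousLinearMap.hasFDerivAt _
  have hinv : (fderiv 𝕜 f (x₀, 0) ∘L .inr 𝕜 E _).IsInvertible := by
    rw [hpartial]
    have := invertibleOfIsUnitDet M (isUnit_iff_ne_zero.2 hdet)
    exact ⟨(M.toLinearEquiv' this).toContinuousLinearEquiv, rfl⟩
  obtain ⟨u, hu, hu₀, hfu⟩ := hf.exists_analyticAt_implicitFunction hinv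
  refine ⟨u, hu, hu₀, ?_⟩
  filter_upwards [hfu] with x hx
  rw [hfx₀, mulVec_zero] at hx
  exact ⟨_, mulVec_cons_one_eq_smul_of_eigenResidual_eq_zero hx⟩

end Eigenvector

section BlockForm

variable {ι K : Type*} [Fintype ι] [DecidableEq ι] [CommRing K] {A C N : Matrix ι ι K}

theorem mul_mul_apply_eq_zero_of_mulVec_col_eq_smul (hCN : C * N = 1) {j : ι} {μ : K}
    (h : A *ᵥ N.col j = μ • N.col j) {i : ι} (hi : i ≠ j) : (C * A * N) i j = 0 := by
  calc (C * A * N) i j = (C *ᵥ A *ᵥ N.col j) i := by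
        rw [← mulVec_single_one N, mulVec_mulVec, mulVec_mulVec, mulVec_single_one]
        rfl
    _ = μ * (C * N) i j := by
        rw [h, mulVec_smul, ← mulVec_single_one N, mulVec_mulVec, mulVec_single_one]
        rfl
    _ = 0 := by simp [hCN, hi]

theorem mul_mul_apply_eq_zero_of_row_vecMul_eq_smul (hCN : C * N = 1) {i : ι} {ν : K}
    (h : C.row i ᵥ* A = ν • C.row i) {j : ι} (hj : j ≠ i) : (C * A * N) i j = 0 := by
  calc (C * A * N) i j = (C.row i ᵥ* A ᵥ* N) j := by
        rw [← single_one_vecMul i C, vecMul_vecMul, vecMul_vecMul, ← Matrix.mul_assoc,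
          single_one_vecMul]
        rfl
    _ = ν * (C * N) i j := by
        rw [h, smul_vecMul, ← single_one_vecMul i C, vecMul_vecMul, single_one_vecMul]
        rfl
    _ = 0 := by simp [hCN, hj.symm]

end BlockForm

section Frame

variable {K : Type*} [CommRing K]

/-- Its first column is `s • vecCons 1 u`; the other two span the annihilator of `vecCons 1 w`. -/
def frame (u w : Fin 2 → K) (s : K) : Matrix (Fin 3) (Fin 3) K :=
  !![s, -w 0, -w 1; s * u 0, 1, 0; s * u 1, 0, 1]

def frameInv (u w : Fin 2 → K) (s : K) : Matrix (Fin 3) (Fin 3) K :=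
  !![1, w 0, w 1;
    -(s * u 0), 1 - s * w 0 * u 0, -(s * w 1 * u 0);
    -(s * u 1), -(s * w 0 * u 1), 1 - s * w 1 * u 1]

variable {u w : Fin 2 → K} {s : K}

theorem frame_col_zero : (frame u w s).col 0 = s • vecCons 1 u := by
  ext i; fin_cases i <;> simp [frame]

theorem frameInv_row_zero : (frameInv u w s).row 0 = vecCons 1 w := by
  ext i; fin_cases i <;> rfl

theorem frameInv_mul_frame (h : s * (1 + w ⬝ᵥ u) = 1) : frameInv u w s * frame u w s = 1 := by
  simp only [dotProduct, Fin.sum_univ_two] at h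
  ext i j
  fin_cases i <;> fin_cases j <;> simp [frame, frameInv, mul_apply, Fin.sum_univ_three] <;>
    first
    | ring1
    | linear_combination h
    | linear_combination (-(s * u 0)) * h
    | linear_combination (-(s * u 1)) * h

theorem det_frameInv : (frameInv u w s).det = 1 := by
  simp [frameInv, det_fin_three]
  ring

theorem frameInv_zero_zero_one : frameInv (0 : Fin 2 → K) 0 1 = 1 := by
  ext i j; fin_cases i <;> fin_cases j <;> simp [frameInv, one_apply]

end Frame

theorem exists_analytic_conjugation_of_blockDiagonal (A : ℂ → Matrix (Fin 3) (Fin 3) ℂ)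
    (hA : ∀ i j, AnalyticAt ℂ (fun t => A t i j) 0)
    (hcol : ∀ i : Fin 2, A 0 i.succ 0 = 0) (hrow : ∀ j : Fin 2, A 0 0 j.succ = 0)
    (hdet : ((A 0).submatrix Fin.succ Fin.succ - A 0 0 0 • 1).det ≠ 0) :
    ∃ (ε : ℝ) (C : ℂ → Matrix (Fin 3) (Fin 3) ℂ), 0 < ε ∧
      (∀ i j : Fin 3, AnalyticAt ℂ (fun t => C t i j) 0) ∧
      C 0 = 1 ∧
      (∀ t : ℂ, ‖t‖ < ε → (C t).det = 1) ∧
      (∀ t : ℂ, ‖t‖ < ε →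
        (C t * A t * (C t)⁻¹) 0 1 = 0 ∧ (C t * A t * (C t)⁻¹) 0 2 = 0 ∧
        (C t * A t * (C t)⁻¹) 1 0 = 0 ∧ (C t * A t * (C t)⁻¹) 2 0 = 0) := by
  obtain ⟨u, hu, hu₀, hAu⟩ := exists_analyticAt_eigenvector_of_blockDiagonal hA hcol hrow hdet
  obtain ⟨w, hw, hw₀, hAw⟩ := exists_analyticAt_eigenvector_of_blockDiagonal
    (A := fun t => (A t)ᵀ) (fun i j => hA j i) hrow hcol
    (by rw [← det_transpose] at hdet; simpa [transpose_submatrix] using hdet)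
  set g : ℂ → ℂ := fun t => 1 + w t ⬝ᵥ u t
  have hu' : ∀ i, AnalyticAt ℂ (fun t => u t i) 0 := analyticAt_pi_iff.1 hu
  have hw' : ∀ i, AnalyticAt ℂ (fun t => w t i) 0 := analyticAt_pi_iff.1 hw
  have hg : AnalyticAt ℂ g 0 := by
    simp only [g, dotProduct, Fin.sum_univ_two]
    fun_prop
  have hg₀ : g 0 = 1 := by simp [g, hu₀, hw₀]
  have hgs : ∀ᶠ t in 𝓝 0, (g t)⁻¹ * g t = 1 :=
    (hg.continuousAt.eventually_ne (by simp [hg₀])).mono fun t ht => inv_mul_cancel₀ ht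
  obtain ⟨ε, hε, hball⟩ := Metric.eventually_nhds_iff_ball.1 (hAu.and (hAw.and hgs))
  refine ⟨ε, fun t => frameInv (u t) (w t) (g t)⁻¹, hε, ?_, ?_, fun t _ => det_frameInv,
    fun t ht => ?_⟩
  · have hg' : AnalyticAt ℂ (fun t => (g t)⁻¹) 0 := hg.inv (by simp [hg₀])
    intro i j
    fin_cases i <;> fin_cases j <;> simp [frameInv] <;> fun_prop
  · simp [hu₀, hw₀, hg₀, frameInv_zero_zero_one]
  · obtain ⟨⟨μ, hAut⟩, ⟨ν, hAwt⟩, hgt⟩ := hball t (mem_ball_zero_iff.2 ht)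
    have hCN := frameInv_mul_frame hgt
    rw [inv_eq_right_inv hCN]
    have hcol₀ : A t *ᵥ (frame (u t) (w t) (g t)⁻¹).col 0
        = μ • (frame (u t) (w t) (g t)⁻¹).col 0 := by
      rw [frame_col_zero, mulVec_smul, hAut, smul_comm]
    have hrow₀ : (frameInv (u t) (w t) (g t)⁻¹).row 0 ᵥ* A t
        = ν • (frameInv (u t) (w t) (g t)⁻¹).row 0 := by
      rw [frameInv_row_zero, ← mulVec_transpose, hAwt]
    exact ⟨mul_mul_apply_eq_zero_of_row_vecMul_eq_smul hCN hrow₀ (by decide),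
      mul_mul_apply_eq_zero_of_row_vecMul_eq_smul hCN hrow₀ (by decide),
      mul_mul_apply_eq_zero_of_mulVec_col_eq_smul hCN hcol₀ (by decide),
      mul_mul_apply_eq_zero_of_mulVec_col_eq_smul hCN hcol₀ (by decide)⟩

/-- Paper's Lemma 4 (lem:eigen): if `A : ℂ → M(3,ℂ)` has entries analytic at `0` and
`A(0) = β·[[α,0,0],[0,1,1],[0,0,1]]` with `β ≠ 0`, `α ≠ 1`, then there is an analytic curve
`C(t)` of determinant-one matrices with `C(0) = I` conjugating `A(t)` into block form
`[[a₁₁,0,0],[0,a₂₂,a₂₃],[0,a₃₂,a₃₃]]` for all small `t`. -/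
theorem exists_analytic_conjugation_to_block_form
    (α β : ℂ) (hβ : β ≠ 0) (hα : α ≠ 1)
    (A : ℂ → Matrix (Fin 3) (Fin 3) ℂ)
    (hA : ∀ i j : Fin 3, AnalyticAt ℂ (fun t => A t i j) 0)
    (hA0 : A 0 = β • !![α, 0, 0; 0, 1, 1; 0, 0, 1]) :
    ∃ (ε : ℝ) (C : ℂ → Matrix (Fin 3) (Fin 3) ℂ), 0 < ε ∧
      (∀ i j : Fin 3, AnalyticAt ℂ (fun t => C t i j) 0) ∧
      C 0 = 1 ∧
      (∀ t : ℂ, ‖t‖ < ε → (C t).det = 1) ∧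
      (∀ t : ℂ, ‖t‖ < ε →
        (C t * A t * (C t)⁻¹) 0 1 = 0 ∧ (C t * A t * (C t)⁻¹) 0 2 = 0 ∧
        (C t * A t * (C t)⁻¹) 1 0 = 0 ∧ (C t * A t * (C t)⁻¹) 2 0 = 0) := by
  refine exists_analytic_conjugation_of_blockDiagonal A hA (fun i => ?_) (fun j => ?_) ?_
  · fin_cases i <;> simp [hA0]
  · fin_cases j <;> simp [hA0]
  · have hdet : ((A 0).submatrix Fin.succ Fin.succ - A 0 0 0 • 1).det = (β * (1 - α)) ^ 2 := by
      simp [hA0, det_fin_two]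
      ring
    rw [hdet]
    exact pow_ne_zero 2 (mul_ne_zero hβ (sub_ne_zero.2 hα.symm))
end

section
/- Let α, β, b, c ∈ ℂ with β ≠ 0, α ≠ 0, α ≠ 1 and b ≠ 0. Let A, B : ℂ → M(3,ℂ) be matrix-valued maps, all of whose entries are analytic at 0, such that: (i) for every t, the (1,2), (1,3), (2,1) and (3,1) entries of A(t) vanish, i.e., A(t) = [[a₁₁(t),0,0],[0,a₂₂(t),a₂₃(t)],[0,a₃₂(t),a₃₃(t)]]; (ii) A(0) = β·[[α,0,0],[0,1,1],[0,0,1]]; (iii) B(0) = β·[[α,b,c],[0,1,1],[0,0,1]]; (iv) the derivative at t = 0 of the (3,1) entry of B(t) is nonzero. Then there exists ε > 0 such that for every t with 0 < |t| < ε, the unital ℂ-subalgebra of M(3,ℂ) generated by the two matrices A(t) and B(t) is all of M(3,ℂ). -/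
/-!
Let `A'` be the lower `2 × 2` block of `A(t)` and `χ` its characteristic polynomial. By
Cayley–Hamilton `χ(A(t)) = χ(a₁₁(t)) E₁₁`, and `χ(a₁₁(0)) = β²(α - 1)² ≠ 0`, so the algebra `S`
generated by `A(t)` and `B(t)` contains `E₁₁`. Then `S` contains every `x E₁₁ y = (x e₁)(e₁ᵀ y)`
with `x, y ∈ S`, so `S = M(3, ℂ)` as soon as the first columns and the first rows of elements of `S`
span `ℂ³`. For the columns of `E₁₁, B, AB` this says that the lower part `w` of `B e₁` is a cyclic
vector of `A'`; for the rows of `E₁₁, B, BA`, that the lower part `u` of `e₁ᵀ B` is cyclic for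
`A'ᵀ`. The latter is an open condition which holds at `t = 0` because `b ≠ 0`. The vector `w(t)`
vanishes at `t = 0`, but `det [w, A'w] = t² det [w/t, A'(w/t)]` and `w(t)/t → w'(0)`, which is
cyclic for `A'(0)` because its second entry `b₃₁'(0)` is nonzero.
-/

open Filter Matrix Topology Polynomial

theorem Submodule.exists_mem_apply_eq_of_det_ne_zero {K M n : Type*} [Field K] [AddCommGroup M]
    [Module K M] [Fintype n] [DecidableEq n] {S : Submodule K M} (φ : M →ₗ[K] n → K)
    {x : n → M} (hx : ∀ j, x j ∈ S) (hdet : (of fun j => φ (x j)).det ≠ 0) (v : n → K) :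
    ∃ y ∈ S, φ y = v := by
  have hspan := (linearIndependent_rows_of_det_ne_zero hdet).span_eq_top_of_card_eq_finrank'
    (by simp)
  have hv : v ∈ S.map φ :=
    Submodule.span_le.mpr (Set.range_subset_iff.mpr fun j => Submodule.mem_map_of_mem (hx j))
      (hspan ▸ Submodule.mem_top)
  simpa using hv

theorem Matrix.subalgebra_eq_top_of_single_mem {K n : Type*} [Field K] [Fintype n]
    [DecidableEq n] {S : Subalgebra K (Matrix n n K)} {i : n} (hE : single i i 1 ∈ S)
    {x y : n → Matrix n n K} (hx : ∀ j, x j ∈ S) (hy : ∀ j, y j ∈ S)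
    (hxdet : (of fun j => (x j)ᵀ i).det ≠ 0) (hydet : (of fun j => y j i).det ≠ 0) :
    S = ⊤ := by
  have hcol := Submodule.exists_mem_apply_eq_of_det_ne_zero (S := Subalgebra.toSubmodule S)
    ((LinearMap.proj i).compLeft n) hx hxdet
  have hrow := Submodule.exists_mem_apply_eq_of_det_ne_zero (S := Subalgebra.toSubmodule S)
    (LinearMap.proj i) hy hydet
  have hsingle : ∀ k l, single k l (1 : K) ∈ S := fun k l => by
    obtain ⟨x, hxS, hxk⟩ := hcol (Pi.single k 1)
    obtain ⟨y, hyS, hyl⟩ := hrow (Pi.single l 1)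
    have hprod : x * single i i 1 * y = single k l 1 := by
      refine Matrix.ext fun a b => ?_
      have hxa : x a i = (Pi.single k 1 : n → K) a := congrFun hxk a
      have hyb : y i b = (Pi.single l 1 : n → K) b := congrFun hyl b
      simp [mul_apply, single_apply, hxa, hyb, Pi.single_apply, ite_and, eq_comm]
    exact hprod ▸ mul_mem (mul_mem hxS hE) hyS
  refine eq_top_iff.mpr fun m _ => ?_
  rw [matrix_eq_sum_single m]
  exact sum_mem fun k _ => sum_mem fun l _ => by
    simpa using Subalgebra.smul_mem S (hsingle k l) (m k l)

def krylovDet {R : Type*} [CommRing R] (M : Matrix (Fin 2) (Fin 2) R) (v : Fin 2 → R) : R :=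
  (of ![v, M *ᵥ v]).det

theorem krylovDet_smul {R : Type*} [CommRing R] (M : Matrix (Fin 2) (Fin 2) R) (c : R)
    (v : Fin 2 → R) : krylovDet M (c • v) = c ^ 2 * krylovDet M v := by
  simp only [krylovDet, det_fin_two, mulVec_smul, of_apply, cons_val_zero, cons_val_one,
    Pi.smul_apply, smul_eq_mul]
  ring

theorem continuous_krylovDet {R : Type*} [CommRing R] [TopologicalSpace R]
    [IsTopologicalRing R] :
    Continuous fun p : Matrix (Fin 2) (Fin 2) R × (Fin 2 → R) => krylovDet p.1 p.2 := by
  simp only [krylovDet, det_fin_two]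
  fun_prop

theorem eventually_krylovDet_ne_zero_of_hasDerivAt {𝕜 : Type*} [NontriviallyNormedField 𝕜]
    {L : 𝕜 → Matrix (Fin 2) (Fin 2) 𝕜} {w : 𝕜 → Fin 2 → 𝕜} {L₀ : Matrix (Fin 2) (Fin 2) 𝕜}
    {w' : Fin 2 → 𝕜} (hL : Tendsto L (𝓝[≠] 0) (𝓝 L₀)) (hw : HasDerivAt w w' 0) (hw0 : w 0 = 0)
    (hdet : krylovDet L₀ w' ≠ 0) : ∀ᶠ t in 𝓝[≠] 0, krylovDet (L t) (w t) ≠ 0 := by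
  have hslope : Tendsto (fun t => t⁻¹ • w t) (𝓝[≠] 0) (𝓝 w') := by
    refine (hasDerivAt_iff_tendsto_slope.mp hw).congr fun t => ?_
    rw [slope_def_module, hw0, sub_zero, sub_zero]
  filter_upwards [((continuous_krylovDet.tendsto _).comp (hL.prodMk_nhds hslope)).eventually_ne
    hdet, self_mem_nhdsWithin] with t ht (ht0 : t ≠ 0)
  rw [← smul_inv_smul₀ ht0 (w t), krylovDet_smul]
  exact mul_ne_zero (pow_ne_zero _ ht0) ht

def lowerBlock {R : Type*} (A : Matrix (Fin 3) (Fin 3) R) : Matrix (Fin 2) (Fin 2) R :=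
  A.submatrix Fin.succ Fin.succ

theorem continuous_lowerBlock {R : Type*} [TopologicalSpace R] :
    Continuous (lowerBlock : Matrix (Fin 3) (Fin 3) R → _) :=
  continuous_id.matrix_submatrix _ _

theorem continuous_eval_charpoly_lowerBlock {R : Type*} [CommRing R] [Nontrivial R]
    [TopologicalSpace R] [IsTopologicalRing R] :
    Continuous fun M : Matrix (Fin 3) (Fin 3) R => (lowerBlock M).charpoly.eval (M 0 0) := by
  simp only [charpoly_fin_two, eval_add, eval_sub, eval_pow, eval_X, eval_mul, eval_C,
    trace_fin_two, det_fin_two, lowerBlock, submatrix_apply]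
  fun_prop

theorem aeval_charpoly_lowerBlock {R : Type*} [CommRing R] [Nontrivial R]
    {A : Matrix (Fin 3) (Fin 3) R} (hA : A 0 1 = 0 ∧ A 0 2 = 0 ∧ A 1 0 = 0 ∧ A 2 0 = 0) :
    aeval A (lowerBlock A).charpoly = (lowerBlock A).charpoly.eval (A 0 0) • single 0 0 1 := by
  obtain ⟨h01, h02, h10, h20⟩ := hA
  rw [charpoly_fin_two]
  ext i j
  fin_cases i <;> fin_cases j <;>
    simp [lowerBlock, trace_fin_two, det_fin_two, sq, mul_apply, algebraMap_matrix_apply,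
      Fin.sum_univ_three, h01, h02, h10, h20] <;> ring

theorem adjoin_pair_eq_top {K : Type*} [Field K] {A B : Matrix (Fin 3) (Fin 3) K}
    (hA : A 0 1 = 0 ∧ A 0 2 = 0 ∧ A 1 0 = 0 ∧ A 2 0 = 0)
    (hχ : (lowerBlock A).charpoly.eval (A 0 0) ≠ 0)
    (hcol : krylovDet (lowerBlock A) (fun k => B k.succ 0) ≠ 0)
    (hrow : krylovDet (lowerBlock A)ᵀ (fun k => B 0 k.succ) ≠ 0) :
    Algebra.adjoin K {A, B} = ⊤ := by
  set S := Algebra.adjoin K {A, B}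
  have hAS : A ∈ S := Algebra.subset_adjoin (Set.mem_insert _ _)
  have hBS : B ∈ S := Algebra.subset_adjoin (Set.mem_insert_of_mem _ rfl)
  have hE : single 0 0 1 ∈ S := by
    have h := Algebra.adjoin_mono (Set.singleton_subset_iff.mpr (Set.mem_insert A {B}))
      (aeval_mem_adjoin_singleton K (p := (lowerBlock A).charpoly) (x := A))
    rw [aeval_charpoly_lowerBlock hA] at h
    simpa [hχ] using Subalgebra.smul_mem S h ((lowerBlock A).charpoly.eval (A 0 0))⁻¹
  obtain ⟨h01, h02, h10, h20⟩ := hA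
  refine subalgebra_eq_top_of_single_mem hE (x := ![single 0 0 1, B, A * B])
    (y := ![single 0 0 1, B, B * A]) ?_ ?_ ?_ ?_
  · simp [Fin.forall_fin_succ, hE, hBS, mul_mem hAS hBS]
  · simp [Fin.forall_fin_succ, hE, hBS, mul_mem hBS hAS]
  · convert hcol using 1
    simp [krylovDet, lowerBlock, det_fin_three, det_fin_two, mul_apply, Fin.sum_univ_three,
      h01, h02, h10, h20]
  · convert hrow using 1
    simp only [krylovDet, lowerBlock, det_fin_three, det_fin_two, mul_apply, Fin.sum_univ_three,
      h01, h02, h10, h20, transpose_submatrix, transpose_apply, submatrix_apply, mulVec_fin_two,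
      Fin.succ_zero_eq_one, Fin.succ_one_eq_two, single_apply_same, single_apply_of_ne, of_apply,
      cons_val', cons_val_zero, cons_val_one, cons_val, cons_val_fin_one, Fin.isValue,
      Fin.reduceEq, zero_ne_one, and_false, not_false_eq_true, one_mul, mul_zero, zero_mul,
      zero_add, add_zero, sub_zero]
    ring

theorem exists_forall_of_eventually_nhdsNE_zero {E : Type*} [NormedAddCommGroup E]
    {P : E → Prop} (h : ∀ᶠ x in 𝓝[≠] 0, P x) :
    ∃ ε > (0 : ℝ), ∀ x : E, 0 < ‖x‖ → ‖x‖ < ε → P x := by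
  obtain ⟨ε, hε, h⟩ := Metric.eventually_nhds_iff.mp (eventually_nhdsWithin_iff.mp h)
  exact ⟨ε, hε, fun x hx hxε => h (by rwa [dist_zero_right]) (norm_pos_iff.mp hx)⟩

section Deformation

variable {𝕜 : Type*} [NontriviallyNormedField 𝕜] {α β b c : 𝕜}
  {A B : 𝕜 → Matrix (Fin 3) (Fin 3) 𝕜}

theorem eventually_eval_charpoly_lowerBlock_ne_zero (hβ : β ≠ 0) (hα1 : α ≠ 1)
    (hA : ContinuousAt A 0) (hA0 : A 0 = β • !![α, 0, 0; 0, 1, 1; 0, 0, 1]) :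
    ∀ᶠ t in 𝓝 0, (lowerBlock (A t)).charpoly.eval (A t 0 0) ≠ 0 := by
  refine (continuous_eval_charpoly_lowerBlock.continuousAt.comp hA).eventually_ne
    (ne_of_eq_of_ne (b := β ^ 2 * (α - 1) ^ 2) ?_
      (mul_ne_zero (pow_ne_zero 2 hβ) (pow_ne_zero 2 (sub_ne_zero.2 hα1))))
  simp only [Function.comp_apply, hA0, lowerBlock, charpoly_fin_two, trace_fin_two, det_fin_two,
    submatrix_apply, Fin.succ_zero_eq_one, Fin.succ_one_eq_two, Matrix.smul_apply, of_apply,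
    cons_val', cons_val_zero, cons_val_one, cons_val, cons_val_fin_one, smul_eq_mul, mul_one,
    mul_zero, sub_zero, map_add, map_sub, map_mul, eval_add, eval_sub, eval_pow, eval_X, eval_mul,
    eval_C]
  ring

theorem eventually_krylovDet_firstRow_ne_zero (hβ : β ≠ 0) (hb : b ≠ 0)
    (hA : ContinuousAt A 0) (hB : ContinuousAt B 0)
    (hA0 : A 0 = β • !![α, 0, 0; 0, 1, 1; 0, 0, 1])
    (hB0 : B 0 = β • !![α, b, c; 0, 1, 1; 0, 0, 1]) :
    ∀ᶠ t in 𝓝 0, krylovDet (lowerBlock (A t))ᵀ (fun k => B t 0 k.succ) ≠ 0 := by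
  have hu : Continuous fun M : Matrix (Fin 3) (Fin 3) 𝕜 => fun k : Fin 2 => M 0 k.succ := by
    fun_prop
  have hcont : ContinuousAt (fun t => ((lowerBlock (A t))ᵀ, fun k : Fin 2 => B t 0 k.succ)) 0 :=
    ((continuous_lowerBlock (R := 𝕜)).matrix_transpose.continuousAt.comp hA).prodMk
      (hu.continuousAt.comp hB)
  refine (continuous_krylovDet.continuousAt.comp hcont).eventually_ne
    (ne_of_eq_of_ne (b := β ^ 3 * b ^ 2) ?_ (mul_ne_zero (pow_ne_zero 3 hβ) (pow_ne_zero 2 hb)))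
  simp only [krylovDet, Function.comp_apply, hA0, hB0, lowerBlock, transpose_submatrix,
    submatrix_apply, transpose_apply, Fin.succ_zero_eq_one, Fin.succ_one_eq_two, mulVec_fin_two,
    det_fin_two, Matrix.smul_apply, smul_of, smul_cons, smul_empty, of_apply, cons_val',
    cons_val_zero, cons_val_one, cons_val, cons_val_fin_one, smul_eq_mul, mul_one, mul_zero,
    zero_mul, add_zero]
  ring

theorem eventually_krylovDet_firstCol_ne_zero (hβ : β ≠ 0)
    (hB31 : deriv (fun t => B t 2 0) 0 ≠ 0) (hA : ContinuousAt A 0)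
    (hB : ∀ k : Fin 2, DifferentiableAt 𝕜 (fun t => B t k.succ 0) 0)
    (hA0 : A 0 = β • !![α, 0, 0; 0, 1, 1; 0, 0, 1])
    (hB0 : B 0 = β • !![α, b, c; 0, 1, 1; 0, 0, 1]) :
    ∀ᶠ t in 𝓝[≠] 0, krylovDet (lowerBlock (A t)) (fun k => B t k.succ 0) ≠ 0 := by
  refine eventually_krylovDet_ne_zero_of_hasDerivAt
    ((continuous_lowerBlock.continuousAt.comp hA).tendsto.mono_left nhdsWithin_le_nhds)
    (hasDerivAt_pi.2 fun k => (hB k).hasDerivAt) (by ext k; fin_cases k <;> simp [hB0])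
    (ne_of_eq_of_ne (b := -(β * deriv (fun t => B t 2 0) 0 ^ 2)) ?_
      (neg_ne_zero.2 (mul_ne_zero hβ (pow_ne_zero 2 hB31))))
  simp only [krylovDet, Function.comp_apply, hA0, lowerBlock, submatrix_apply,
    Fin.succ_zero_eq_one, Fin.succ_one_eq_two, mulVec_fin_two, det_fin_two, smul_of, smul_cons,
    smul_empty, of_apply, cons_val', cons_val_zero, cons_val_one, cons_val, cons_val_fin_one,
    smul_eq_mul, mul_one, mul_zero, zero_mul, zero_add]
  ring

end Deformation

theorem deformation_generates_full_matrix_algebra_general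
    (α β b c : ℂ) (hβ : β ≠ 0) (hα1 : α ≠ 1) (hb : b ≠ 0)
    (A B : ℂ → Matrix (Fin 3) (Fin 3) ℂ)
    (hA : ∀ i j : Fin 3, AnalyticAt ℂ (fun t => A t i j) 0)
    (hB : ∀ i j : Fin 3, AnalyticAt ℂ (fun t => B t i j) 0)
    (hAform : ∀ t : ℂ, A t 0 1 = 0 ∧ A t 0 2 = 0 ∧ A t 1 0 = 0 ∧ A t 2 0 = 0)
    (hA0 : A 0 = β • !![α, 0, 0; 0, 1, 1; 0, 0, 1])
    (hB0 : B 0 = β • !![α, b, c; 0, 1, 1; 0, 0, 1])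
    (hB31 : deriv (fun t => B t 2 0) 0 ≠ 0) :
    ∃ ε > (0 : ℝ), ∀ t : ℂ, 0 < ‖t‖ → ‖t‖ < ε →
      Algebra.adjoin ℂ ({A t, B t} : Set (Matrix (Fin 3) (Fin 3) ℂ)) = ⊤ := by
  have hAc : ContinuousAt A 0 :=
    continuousAt_pi.2 fun i => continuousAt_pi.2 fun j => (hA i j).continuousAt
  have hBc : ContinuousAt B 0 :=
    continuousAt_pi.2 fun i => continuousAt_pi.2 fun j => (hB i j).continuousAt
  refine exists_forall_of_eventually_nhdsNE_zero ?_
  filter_upwards [nhdsWithin_le_nhds (eventually_eval_charpoly_lowerBlock_ne_zero hβ hα1 hAc hA0),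
    eventually_krylovDet_firstCol_ne_zero hβ hB31 hAc (fun k => (hB k.succ 0).differentiableAt)
      hA0 hB0,
    nhdsWithin_le_nhds (eventually_krylovDet_firstRow_ne_zero hβ hb hAc hBc hA0 hB0)]
    with t hχ hcol hrow
  exact adjoin_pair_eq_top (hAform t) hχ hcol hrow

/-- Paper's Proposition 7 (prop:irred): analytic curves `A(t)`, `B(t)` of `3×3` matrices with
`A(t)` in block form, `A(0) = β·[[α,0,0],[0,1,1],[0,0,1]]`, `B(0) = β·[[α,b,c],[0,1,1],[0,0,1]]`
(`b ≠ 0`) and nonzero derivative of the `(3,1)` entry of `B` at `0`, generate the full matrix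
algebra `M(3,ℂ)` for all sufficiently small `t ≠ 0`. -/
theorem deformation_generates_full_matrix_algebra
    (α β b c : ℂ) (hβ : β ≠ 0) (hα0 : α ≠ 0) (hα1 : α ≠ 1) (hb : b ≠ 0)
    (A B : ℂ → Matrix (Fin 3) (Fin 3) ℂ)
    (hA : ∀ i j : Fin 3, AnalyticAt ℂ (fun t => A t i j) 0)
    (hB : ∀ i j : Fin 3, AnalyticAt ℂ (fun t => B t i j) 0)
    (hAform : ∀ t : ℂ, A t 0 1 = 0 ∧ A t 0 2 = 0 ∧ A t 1 0 = 0 ∧ A t 2 0 = 0)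
    (hA0 : A 0 = β • !![α, 0, 0; 0, 1, 1; 0, 0, 1])
    (hB0 : B 0 = β • !![α, b, c; 0, 1, 1; 0, 0, 1])
    (hB31 : deriv (fun t => B t 2 0) 0 ≠ 0) :
    ∃ ε > (0 : ℝ), ∀ t : ℂ, 0 < ‖t‖ → ‖t‖ < ε →
      Algebra.adjoin ℂ ({A t, B t} : Set (Matrix (Fin 3) (Fin 3) ℂ)) = ⊤ :=
  deformation_generates_full_matrix_algebra_general α β b c hβ hα1 hb A B hA hB hAform hA0 hB0 hB31
end

section
/- Let n ≥ 1 and let 𝒜 be a unital ℂ-subalgebra of the matrix algebra M(n,ℂ). Suppose there are vectors v, w ∈ ℂⁿ such that the rank-one matrix v·wᵀ (with (i,j) entry vᵢwⱼ) belongs to 𝒜, the set {M·v : M ∈ 𝒜} spans ℂⁿ, and the set {wᵀ·M : M ∈ 𝒜} spans the space of row vectors ℂⁿ. Then 𝒜 = M(n,ℂ). -/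
namespace Matrix

variable {R ι : Type*} [CommSemiring R] [Fintype ι] [DecidableEq ι]

/-- `M * vecMulVec v w * N = vecMulVec (M *ᵥ v) (w ᵥ* N)`, and `vecMulVec` is bilinear, so the
spanning hypotheses spread `v wᵀ ∈ 𝒜` to every `a bᵀ`. -/
theorem vecMulVec_mem_of_span_eq_top (𝒜 : Subalgebra R (Matrix ι ι R)) {v w : ι → R}
    (hvw : vecMulVec v w ∈ 𝒜)
    (hcol : Submodule.span R {x : ι → R | ∃ M ∈ 𝒜, M *ᵥ v = x} = ⊤)
    (hrow : Submodule.span R {x : ι → R | ∃ M ∈ 𝒜, w ᵥ* M = x} = ⊤) (a b : ι → R) :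
    vecMulVec a b ∈ 𝒜 := by
  have hspan : Submodule.map₂ (vecMulVecBilin R R) ⊤ ⊤ ≤ Subalgebra.toSubmodule 𝒜 := by
    nth_rw 1 [← hcol]
    rw [← hrow, Submodule.map₂_span_span, Submodule.span_le]
    rintro _ ⟨_, ⟨M, hM, rfl⟩, _, ⟨N, hN, rfl⟩, rfl⟩
    simpa [← mul_vecMulVec, ← vecMulVec_mul] using 𝒜.mul_mem (𝒜.mul_mem hM hvw) hN
  exact hspan (Submodule.apply_mem_map₂ _ trivial trivial)

theorem _root_.Subalgebra.eq_top_of_forall_vecMulVec_mem (𝒜 : Subalgebra R (Matrix ι ι R))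
    (h : ∀ a b : ι → R, vecMulVec a b ∈ 𝒜) : 𝒜 = ⊤ := by
  refine eq_top_iff.2 fun M _ => M.induction_on' 𝒜.zero_mem (fun _ _ => 𝒜.add_mem) ?_
  intro i j x
  rw [← mul_one x, ← smul_eq_mul, ← smul_single, single_eq_single_vecMulVec_single]
  exact 𝒜.smul_mem (h _ _) x

end Matrix

theorem subalgebra_eq_top_of_rank_one_general
    (n : ℕ) (𝒜 : Subalgebra ℂ (Matrix (Fin n) (Fin n) ℂ))
    (v w : Fin n → ℂ)
    (hvw : Matrix.vecMulVec v w ∈ 𝒜)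
    (hcol : Submodule.span ℂ {x : Fin n → ℂ | ∃ M ∈ 𝒜, Matrix.mulVec M v = x} = ⊤)
    (hrow : Submodule.span ℂ {x : Fin n → ℂ | ∃ M ∈ 𝒜, Matrix.vecMul w M = x} = ⊤) :
    𝒜 = ⊤ :=
  𝒜.eq_top_of_forall_vecMulVec_mem (Matrix.vecMulVec_mem_of_span_eq_top 𝒜 hvw hcol hrow)

/-- Burnside-type criterion used in the paper: if a unital subalgebra `𝒜 ⊆ M(n,ℂ)` contains a
rank-one matrix `v·wᵀ`, and `𝒜·v` spans `ℂⁿ` while `wᵀ·𝒜` spans the row vectors, then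
`𝒜 = M(n,ℂ)`. -/
theorem subalgebra_eq_top_of_rank_one
    (n : ℕ) (hn : 1 ≤ n) (𝒜 : Subalgebra ℂ (Matrix (Fin n) (Fin n) ℂ))
    (v w : Fin n → ℂ)
    (hvw : Matrix.vecMulVec v w ∈ 𝒜)
    (hcol : Submodule.span ℂ {x : Fin n → ℂ | ∃ M ∈ 𝒜, Matrix.mulVec M v = x} = ⊤)
    (hrow : Submodule.span ℂ {x : Fin n → ℂ | ∃ M ∈ 𝒜, Matrix.vecMul w M = x} = ⊤) :
    𝒜 = ⊤ :=
  subalgebra_eq_top_of_rank_one_general n 𝒜 v w hvw hcol hrow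
end

section
/- Let π be a group, α : π → ℂ* a group homomorphism such that α(γ₀) ≠ 1 for some γ₀ ∈ π, z : π → ℂ a map satisfying z(γ₁γ₂) = z(γ₁) + α(γ₁)z(γ₂) for all γ₁, γ₂ ∈ π which is not a coboundary (there is no c ∈ ℂ with z(γ) = c·(α(γ) − 1) for all γ), h : π → (ℂ,+) a nonzero group homomorphism, and g : π → ℂ any map. Define ρ₀(γ) to be the 3×3 complex matrix with rows (α(γ), z(γ), g(γ)), (0, 1, h(γ)), (0, 0, 1), and assume ρ₀ is a group homomorphism into GL(3,ℂ). Then the only 3×3 complex matrix A with trace 0 satisfying ρ₀(γ)·A = A·ρ₀(γ) for all γ ∈ π is A = 0. -/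
/-!
Comparing entries of `ρ₀(γ) A = A ρ₀(γ)`, an element with `α(γ₀) ≠ 1` kills the entries
`A₂₀, A₁₀`, and one with `h(γ₁) ≠ 0` kills `A₂₁` and forces `A₂₂ = A₁₁`. The entries `(0,1)` and `(0,2)` then give, for
all `γ`, linear relations `u (α(γ) - 1) = v z(γ)` with `u, v` built from `A`; since `z` is not a
coboundary and `α - 1 ≠ 0`, both coefficients vanish. This makes `A` scalar, hence `0` by the
trace condition.
-/

open Matrix

variable {K : Type*} [Field K]

/-- `ρ₀(γ)` in terms of the values `α(γ), z(γ), g(γ), h(γ)`. -/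
abbrev upperTriangular (a z g h : K) : Matrix (Fin 3) (Fin 3) K :=
  !![a, z, g; 0, 1, h; 0, 0, 1]

theorem eq_zero_of_mul_sub_one_eq_mul {ι : Type*} {a z : ι → K} {i₀ : ι} (ha : a i₀ ≠ 1)
    (hz : ¬ ∃ c : K, ∀ i, z i = c * (a i - 1)) {u v : K}
    (huv : ∀ i, u * (a i - 1) = v * z i) : u = 0 ∧ v = 0 := by
  have hv : v = 0 := by
    by_contra hv
    exact hz ⟨u / v, fun i => by field_simp; linear_combination (huv i).symm⟩
  refine ⟨?_, hv⟩
  have hu := huv i₀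
  rw [hv, zero_mul] at hu
  exact (mul_eq_zero.mp hu).resolve_right (sub_ne_zero.mpr ha)

section Entries

variable {a z g h : K} {A : Matrix (Fin 3) (Fin 3) K}

theorem Commute.upperTriangular_apply_two_zero (hA : Commute (upperTriangular a z g h) A) :
    A 2 0 * (a - 1) = 0 := by
  have e := congr_fun₂ hA.eq 2 0
  simp [mul_apply, Fin.sum_univ_three] at e
  linear_combination -e

theorem Commute.upperTriangular_apply_one_zero (hA : Commute (upperTriangular a z g h) A) :
    A 1 0 * (a - 1) = h * A 2 0 := by
  have e := congr_fun₂ hA.eq 1 0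
  simp [mul_apply, Fin.sum_univ_three] at e
  linear_combination -e

theorem Commute.upperTriangular_apply_two_two (hA : Commute (upperTriangular a z g h) A) :
    A 2 0 * g + A 2 1 * h = 0 := by
  have e := congr_fun₂ hA.eq 2 2
  simpa [mul_apply, Fin.sum_univ_three] using e

theorem Commute.upperTriangular_apply_zero_one (hA : Commute (upperTriangular a z g h) A) :
    A 0 1 * (a - 1) + g * A 2 1 = (A 0 0 - A 1 1) * z := by
  have e := congr_fun₂ hA.eq 0 1
  simp [mul_apply, Fin.sum_univ_three] at e
  linear_combination e

theorem Commute.upperTriangular_apply_one_two (hA : Commute (upperTriangular a z g h) A) :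
    h * (A 2 2 - A 1 1) = A 1 0 * g := by
  have e := congr_fun₂ hA.eq 1 2
  simp [mul_apply, Fin.sum_univ_three] at e
  linear_combination e

theorem Commute.upperTriangular_apply_zero_two (hA : Commute (upperTriangular a z g h) A) :
    A 0 2 * (a - 1) + z * A 1 2 + g * (A 2 2 - A 0 0) = A 0 1 * h := by
  have e := congr_fun₂ hA.eq 0 2
  simp [mul_apply, Fin.sum_univ_three] at e
  linear_combination e

end Entries

section Family

variable {ι : Type*} {a z g h : ι → K} {A : Matrix (Fin 3) (Fin 3) K}

theorem lower_entries_eq_zero_of_commute {i₀ i₁ : ι} (ha : a i₀ ≠ 1) (hh : h i₁ ≠ 0)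
    (hA : ∀ i, Commute (upperTriangular (a i) (z i) (g i) (h i)) A) :
    A 2 0 = 0 ∧ A 1 0 = 0 ∧ A 2 1 = 0 := by
  have ha' : a i₀ - 1 ≠ 0 := sub_ne_zero.mpr ha
  have h20 : A 2 0 = 0 :=
    (mul_eq_zero.mp (hA i₀).upperTriangular_apply_two_zero).resolve_right ha'
  have h10 : A 1 0 * (a i₀ - 1) = 0 := by
    simpa [h20] using (hA i₀).upperTriangular_apply_one_zero
  have h21 : A 2 1 * h i₁ = 0 := by
    simpa [h20] using (hA i₁).upperTriangular_apply_two_two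
  exact ⟨h20, (mul_eq_zero.mp h10).resolve_right ha', (mul_eq_zero.mp h21).resolve_right hh⟩

theorem eq_zero_of_commute_upperTriangular [CharZero K] {i₀ i₁ : ι} (ha : a i₀ ≠ 1)
    (hz : ¬ ∃ c : K, ∀ i, z i = c * (a i - 1)) (hh : h i₁ ≠ 0) (htr : A.trace = 0)
    (hA : ∀ i, Commute (upperTriangular (a i) (z i) (g i) (h i)) A) : A = 0 := by
  obtain ⟨h20, h10, h21⟩ := lower_entries_eq_zero_of_commute ha hh hA
  obtain ⟨h01, h00_11⟩ : A 0 1 = 0 ∧ A 0 0 - A 1 1 = 0 :=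
    eq_zero_of_mul_sub_one_eq_mul ha hz fun i => by
      simpa [h21] using (hA i).upperTriangular_apply_zero_one
  have h22_11 : A 2 2 - A 1 1 = 0 := by
    simpa [h10, hh] using (hA i₁).upperTriangular_apply_one_two
  have h11 : A 1 1 = 0 := by
    have htr' : A 0 0 + A 1 1 + A 2 2 = 0 := by simpa [trace, Fin.sum_univ_three] using htr
    have h3 : (3 : K) * A 1 1 = 0 := by linear_combination htr' - h00_11 - h22_11
    simpa using h3
  obtain ⟨h02, h12⟩ : A 0 2 = 0 ∧ -A 1 2 = 0 :=
    eq_zero_of_mul_sub_one_eq_mul ha hz fun i => by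
      linear_combination (hA i).upperTriangular_apply_zero_two - g i * (h22_11 - h00_11)
        + h i * h01
  ext i j
  fin_cases i <;> fin_cases j <;> simp_all

end Family

theorem centralizer_traceless_eq_zero_general (π : Type) [Group π] (α : π →* ℂˣ)
    (γ₀ : π) (hα : (α γ₀ : ℂ) ≠ 1)
    (z : π → ℂ)
    (hznc : ¬ ∃ c : ℂ, ∀ γ : π, z γ = c * ((α γ : ℂ) - 1))
    (h : π → ℂ)
    (hhne : h ≠ 0)
    (g : π → ℂ)
    (ρ₀ : π → Matrix (Fin 3) (Fin 3) ℂ)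
    (hρ₀ : ∀ γ : π, ρ₀ γ = !![(α γ : ℂ), z γ, g γ; 0, 1, h γ; 0, 0, 1]) :
    ∀ A : Matrix (Fin 3) (Fin 3) ℂ,
      A.trace = 0 → (∀ γ : π, ρ₀ γ * A = A * ρ₀ γ) → A = 0 := by
  intro A htr hA
  obtain ⟨γ₁, hγ₁⟩ : ∃ γ, h γ ≠ 0 := Function.ne_iff.mp hhne
  refine eq_zero_of_commute_upperTriangular (a := fun γ => (α γ : ℂ)) (g := g) hα hznc hγ₁ htr
    fun γ => ?_
  rw [Commute, SemiconjBy, upperTriangular, ← hρ₀]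
  exact hA γ

/-- `H⁰(π, sl(3,ℂ)) = 0` for the reducible metabelian representation `ρ₀`: the only traceless
matrix commuting with every `ρ₀(γ)` is `0`. -/
theorem centralizer_traceless_eq_zero (π : Type) [Group π] (α : π →* ℂˣ)
    (γ₀ : π) (hα : (α γ₀ : ℂ) ≠ 1)
    (z : π → ℂ) (hz : ∀ γ₁ γ₂ : π, z (γ₁ * γ₂) = z γ₁ + (α γ₁ : ℂ) * z γ₂)
    (hznc : ¬ ∃ c : ℂ, ∀ γ : π, z γ = c * ((α γ : ℂ) - 1))
    (h : π → ℂ) (hh : ∀ γ₁ γ₂ : π, h (γ₁ * γ₂) = h γ₁ + h γ₂)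
    (hhne : h ≠ 0)
    (g : π → ℂ)
    (ρ₀ : π → Matrix (Fin 3) (Fin 3) ℂ)
    (hρ₀ : ∀ γ : π, ρ₀ γ = !![(α γ : ℂ), z γ, g γ; 0, 1, h γ; 0, 0, 1])
    (hhom : ∀ γ₁ γ₂ : π, ρ₀ (γ₁ * γ₂) = ρ₀ γ₁ * ρ₀ γ₂) :
    ∀ A : Matrix (Fin 3) (Fin 3) ℂ,
      A.trace = 0 → (∀ γ : π, ρ₀ γ * A = A * ρ₀ γ) → A = 0 :=
  centralizer_traceless_eq_zero_general π α γ₀ hα z hznc h hhne g ρ₀ hρ₀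
end

section
/- Let n ≥ 1 and A ∈ M(n,ℂ). If the centralizer {X ∈ M(n,ℂ) : A·X = X·A} of A in the matrix algebra has dimension n as a complex vector space, then it equals ℂ[A], the unital ℂ-subalgebra of M(n,ℂ) generated by A. -/
/-!
Let `M` be `ℂⁿ` made into a `ℂ[X]`-module by letting `X` act as `A`; the centralizer of `A` is
`End_{ℂ[X]} M`. By the structure theorem, `M ≅ ∏ ℂ[X] ⧸ (aᵢ)` with each `aᵢ` a prime power.
If the `aᵢ` are pairwise coprime, `M` is cyclic by the Chinese remainder theorem, so evaluation
at a generator maps `ℂ[A]` onto `ℂⁿ` and `dim ℂ[A] ≥ n`. Otherwise two factors share a prime,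
which gives a nonzero map `ℂ[X] ⧸ (aᵢ) → ℂ[X] ⧸ (aⱼ)`; the endomorphism of `M` it induces is not
a multiplication in the ring `∏ ℂ[X] ⧸ (aᵢ)`, so the centralizer has dimension `> n`.
-/

open Polynomial Module Matrix

theorem exists_linearMap_quotient_span_singleton_apply_one_ne_zero {R : Type*} [CommRing R]
    [IsDomain R] {a b : R} (hb : b ≠ 0) (hab : ¬ IsRelPrime a b) :
    ∃ ψ : (R ⧸ R ∙ a) →ₗ[R] R ⧸ R ∙ b, ψ 1 ≠ 0 := by
  obtain ⟨d, ⟨a', rfl⟩, ⟨z, rfl⟩, hd⟩ : ∃ d, d ∣ a ∧ d ∣ b ∧ ¬ IsUnit d := by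
    simpa [IsRelPrime] using hab
  refine ⟨Submodule.mapQ _ _ (LinearMap.mulRight R z) ?_, ?_⟩
  · rw [Submodule.span_le, Set.singleton_subset_iff]
    exact Submodule.mem_span_singleton.mpr ⟨a', by simp; ring⟩
  · have hz : z ≠ 0 := right_ne_zero_of_mul hb
    change Submodule.Quotient.mk (1 * z) ≠ 0
    rw [one_mul, Ne, Submodule.Quotient.mk_eq_zero, Submodule.mem_span_singleton]
    rintro ⟨c, hc⟩
    rw [smul_eq_mul] at hc
    exact hd (IsUnit.of_mul_eq_one (b := c) (mul_left_cancel₀ hz (by linear_combination hc)))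

theorem Ideal.isPrincipal_top_pi_quotient {R ι : Type*} [CommRing R] [Finite ι] {I : ι → Ideal R}
    (hI : Pairwise (Function.onFun IsCoprime I)) :
    (⊤ : Submodule R (∀ i, R ⧸ I i)).IsPrincipal := by
  refine ⟨1, (Submodule.eq_top_iff'.mpr fun w => ?_).symm⟩
  obtain ⟨y, hy⟩ := Ideal.quotientInfToPiQuotient_surj hI w
  obtain ⟨r, rfl⟩ := Ideal.Quotient.mk_surjective y
  refine Submodule.mem_span_singleton.mpr ⟨r, ?_⟩
  ext i
  simp [← hy, Ideal.quotientInfToPiQuotient_mk', Algebra.smul_def]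

theorem Pi.not_surjective_lmul {R ι : Type*} [CommSemiring R] [DecidableEq ι] {A : ι → Type*}
    [∀ i, Semiring (A i)] [∀ i, Algebra R (A i)] {i j : ι} (hij : i ≠ j)
    (ψ : A i →ₗ[R] A j) (hψ : ψ 1 ≠ 0) :
    ¬ Function.Surjective (Algebra.lmul R (∀ i, A i)) := by
  rintro hsurj
  obtain ⟨a, ha⟩ := hsurj (LinearMap.single R A j ∘ₗ ψ ∘ₗ LinearMap.proj i)
  have hj := congrFun (LinearMap.congr_fun ha (Pi.single i 1)) j
  exact hψ (by simpa [hij.symm] using hj.symm)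

theorem finrank_lt_finrank_end_of_not_surjective_lmul {K R A : Type*} [Field K] [CommRing R]
    [Ring A] [Algebra K R] [Algebra R A] [Algebra K A] [IsScalarTower K R A]
    [FiniteDimensional K A] (h : ¬ Function.Surjective (Algebra.lmul R A)) :
    finrank K A < finrank K (Module.End R A) := by
  have : FiniteDimensional K (Module.End R A) :=
    .of_injective (LinearMap.restrictScalarsₗ K R A A K) (LinearMap.restrictScalars_injective K)
  let L : A →ₗ[K] Module.End R A := (Algebra.lmul R A).toLinearMap.restrictScalars K
  calc finrank K A = finrank K (LinearMap.range L) :=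
        (LinearMap.finrank_range_of_inj (f := L) Algebra.lmul_injective).symm
    _ < finrank K (Module.End R A) :=
      Submodule.finrank_lt fun hL => h (LinearMap.range_eq_top.mp hL :)

theorem Polynomial.isTorsion_of_finite {K M : Type*} [Field K] [AddCommGroup M] [Module K[X] M]
    [Module K M] [IsScalarTower K K[X] M] [Module.Finite K M] : Module.IsTorsion K[X] M := by
  intro m
  have : ¬ Function.Injective ((LinearMap.toSpanSingleton K[X] M m).restrictScalars K) :=
    fun h => Polynomial.not_finite (Module.Finite.of_injective _ h)
  obtain ⟨p, hpm, hp⟩ : ∃ p : K[X], p • m = 0 ∧ p ≠ 0 := by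
    simpa [injective_iff_map_eq_zero] using this
  exact ⟨⟨p, mem_nonZeroDivisors_of_ne_zero hp⟩, hpm⟩

theorem Polynomial.isPrincipal_top_of_finrank_end_le {K M : Type*} [Field K] [AddCommGroup M]
    [Module K[X] M] [Module K M] [IsScalarTower K K[X] M] [FiniteDimensional K M]
    (h : finrank K (Module.End K[X] M) ≤ finrank K M) : (⊤ : Submodule K[X] M).IsPrincipal := by
  classical
  have : Module.Finite K[X] M := .of_restrictScalars_finite K K[X] M
  obtain ⟨ι, _, p, hp, e, ⟨F⟩⟩ :=
    Module.equiv_directSum_of_isTorsion (isTorsion_of_finite (K := K) (M := M))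
  let Q := ∀ i, K[X] ⧸ K[X] ∙ p i ^ e i
  let G : M ≃ₗ[K[X]] Q := F.trans (DirectSum.linearEquivFunOnFintype _ _ _)
  by_cases hco : Pairwise (Function.onFun IsCoprime fun i => p i ^ e i)
  · have hQ := Ideal.isPrincipal_top_pi_quotient (I := fun i => Ideal.span {p i ^ e i})
      fun i j hij => (Ideal.isCoprime_span_singleton_iff _ _).mpr (hco hij)
    simpa using hQ.map G.symm.toLinearMap
  · obtain ⟨i, j, hij, hnc⟩ : ∃ i j, i ≠ j ∧ ¬ IsCoprime (p i ^ e i) (p j ^ e j) := by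
      simpa [Pairwise] using hco
    obtain ⟨ψ, hψ⟩ := exists_linearMap_quotient_span_singleton_apply_one_ne_zero
      (pow_ne_zero _ (hp j).ne_zero) (mt IsRelPrime.isCoprime hnc)
    have : FiniteDimensional K Q := .equiv (G.restrictScalars K)
    have hlt : finrank K Q < finrank K (Module.End K[X] Q) :=
      finrank_lt_finrank_end_of_not_surjective_lmul
        (Pi.not_surjective_lmul (A := fun i => K[X] ⧸ K[X] ∙ p i ^ e i) hij ψ hψ)
    rw [← (G.restrictScalars K).finrank_eq, ← (G.conj.restrictScalars K).finrank_eq] at hlt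
    omega

theorem finrank_le_finrank_adjoin_of_isPrincipal_top {K S V : Type*} [Field K] [Ring S]
    [Algebra K S] [Module.Finite K S] [AddCommGroup V] [Module S V] [Module K V]
    [IsScalarTower K S V] {a : S} (h : (⊤ : Submodule K[X] (AEval K V a)).IsPrincipal) :
    finrank K V ≤ finrank K (Algebra.adjoin K {a}) := by
  obtain ⟨v, hv⟩ := h
  let ev : Algebra.adjoin K {a} →ₗ[K] V :=
    (LinearMap.toSpanSingleton S V ((AEval.of K V a).symm v)).restrictScalars K ∘ₗ
      (Algebra.adjoin K {a}).val.toLinearMap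
  have hev : Function.Surjective ev := by
    intro w
    have hw : AEval.of K V a w ∈ K[X] ∙ v := hv ▸ Submodule.mem_top
    obtain ⟨q, hq⟩ := Submodule.mem_span_singleton.mp hw
    refine ⟨⟨aeval a q, aeval_mem_adjoin_singleton K a⟩, ?_⟩
    simpa [ev] using congr((AEval.of K V a).symm $hq)
  exact LinearMap.finrank_le_finrank_of_surjective hev

theorem Matrix.finrank_end_aeval_le_finrank_centralizer {ι K : Type*} [Fintype ι] [DecidableEq ι]
    [Field K] (A : Matrix ι ι K) :
    finrank K (Module.End K[X] (AEval K (ι → K) A)) ≤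
      finrank K (Subalgebra.centralizer K {A}) := by
  let Φ : Module.End K[X] (AEval K (ι → K) A) →ₗ[K] Matrix ι ι K :=
    LinearMap.toMatrix'.toLinearMap ∘ₗ (AEval.of K (ι → K) A).symm.conj.toLinearMap ∘ₗ
      LinearMap.restrictScalarsₗ K K[X] _ _ K
  have hΦ : Function.Injective Φ := by
    intro g h hgh
    ext m
    simpa [Φ, LinearEquiv.conj_apply] using congr($hgh *ᵥ (AEval.of K _ A).symm m)
  have hcomm : ∀ g, Φ g ∈ Subalgebra.toSubmodule (Subalgebra.centralizer K {A}) := by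
    rintro g _ rfl
    refine (Matrix.toLin' (R := K)).injective (LinearMap.ext fun v => ?_)
    simp only [Φ, LinearMap.coe_comp, LinearEquiv.coe_coe, Function.comp_apply,
      LinearMap.restrictScalarsₗ_apply, LinearEquiv.conj_apply, LinearEquiv.symm_symm, toLin'_mul,
      toLin'_toMatrix', LinearMap.coe_restrictScalars, toLin'_apply]
    rw [← smul_eq_mulVec, ← smul_eq_mulVec, ← AEval.X_smul_of, map_smul, AEval.of_symm_X_smul]
  rw [← Subalgebra.finrank_toSubmodule]
  exact LinearMap.finrank_le_finrank_of_injective (f := Φ.codRestrict _ hcomm)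
    fun _ _ hgh => hΦ (congrArg Subtype.val hgh)

theorem centralizer_eq_adjoin_of_finrank_eq_general
    (n : ℕ) (A : Matrix (Fin n) (Fin n) ℂ)
    (hdim : Module.finrank ℂ
      (Subalgebra.centralizer ℂ ({A} : Set (Matrix (Fin n) (Fin n) ℂ))) = n) :
    Subalgebra.centralizer ℂ ({A} : Set (Matrix (Fin n) (Fin n) ℂ)) =
      Algebra.adjoin ℂ ({A} : Set (Matrix (Fin n) (Fin n) ℂ)) := by
  have hcyc : (⊤ : Submodule ℂ[X] (AEval ℂ (Fin n → ℂ) A)).IsPrincipal := by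
    refine isPrincipal_top_of_finrank_end_le ?_
    calc _ ≤ finrank ℂ (Subalgebra.centralizer ℂ {A}) := finrank_end_aeval_le_finrank_centralizer A
      _ = finrank ℂ (Fin n → ℂ) := by rw [hdim, finrank_fin_fun]
  refine (Subalgebra.eq_of_le_of_finrank_le ?_ ?_).symm
  · exact Algebra.adjoin_le (by simp [Set.mem_centralizer_iff])
  · calc _ = finrank ℂ (Fin n → ℂ) := by rw [hdim, finrank_fin_fun]
      _ ≤ _ := finrank_le_finrank_adjoin_of_isPrincipal_top hcyc

/-- If the centralizer of `A ∈ M(n,ℂ)` in the matrix algebra has dimension `n`, then it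
coincides with `ℂ[A]`, the unital subalgebra generated by `A`. -/
theorem centralizer_eq_adjoin_of_finrank_eq
    (n : ℕ) (hn : 1 ≤ n) (A : Matrix (Fin n) (Fin n) ℂ)
    (hdim : Module.finrank ℂ
      (Subalgebra.centralizer ℂ ({A} : Set (Matrix (Fin n) (Fin n) ℂ))) = n) :
    Subalgebra.centralizer ℂ ({A} : Set (Matrix (Fin n) (Fin n) ℂ)) =
      Algebra.adjoin ℂ ({A} : Set (Matrix (Fin n) (Fin n) ℂ)) :=
  centralizer_eq_adjoin_of_finrank_eq_general n A hdim
end
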